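/- Assume the trust-region parameter block. Then (1/2)·c₆·ζ ≥ κ_fcd·(η₁ − η). Consequently, if γ > 1 and ν ∈ (0,1) satisfy ν/(1−ν) > (γ² − γ⁻²)/((η₁ − η)·κ_fcd·min{η₂/κ_bmh, 1}), then ν·(1/2)·c₆·ζ > (1 − ν)·(γ² − 1), i.e., −(1/2)·ν·c₆·ζ + (1 − ν)(γ² − 1) < 0. -/
import Mathlib

set_option maxHeartbeats 1000000


theorem stmt_7 (L κbmh κgrad κfcd η₂ η₁ η ζ : ℝ)
    (hL : 0 < L) (hκbmh : 1 ≤ κbmh) (hκgrad : 0 < κgrad) (hκfcd : 0 < κfcd)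
    (hη₂ : 0 < η₂) (hη₁ : η₁ ∈ Set.Ioo (0 : ℝ) 1)
    (hη : η ∈ Set.Ioo 0 (min η₁ (1 - η₁)))
    (hζ : ζ ≥ κgrad + max η₂
      (4 * ((L + κbmh + 2 * κgrad) / 4) / ((1 - η₁ - η) * min κfcd 1))) :
    (1 / 2) * (κfcd - (2 * ((L + κbmh + 2 * κgrad) / 4) + κfcd * κgrad) / ζ) * ζ ≥
        κfcd * (η₁ - η) ∧
      ∀ γ ν : ℝ, 1 < γ → ν ∈ Set.Ioo (0 : ℝ) 1 →
        ν / (1 - ν) > (γ ^ 2 - γ⁻¹ ^ 2) / ((η₁ - η) * κfcd * min (η₂ / κbmh) 1) →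
        ν * ((1 / 2) * (κfcd - (2 * ((L + κbmh + 2 * κgrad) / 4) + κfcd * κgrad) / ζ) * ζ) >
            (1 - ν) * (γ ^ 2 - 1) ∧
          -(1 / 2) * ν * (κfcd - (2 * ((L + κbmh + 2 * κgrad) / 4) + κfcd * κgrad) / ζ) * ζ +
              (1 - ν) * (γ ^ 2 - 1) < 0 := by
  obtain ⟨hη₁0, hη₁1⟩ := hη₁
  obtain ⟨hη0, hηlt⟩ := hη
  have hη1 : η < η₁ := lt_of_lt_of_le hηlt (min_le_left _ _)
  have hη2' : η < 1 - η₁ := lt_of_lt_of_le hηlt (min_le_right _ _)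
  have hd : 0 < 1 - η₁ - η := by linarith
  have hd1 : 1 - η₁ - η < 1 := by linarith
  set κval := (L + κbmh + 2 * κgrad) / 4 with hκval
  have hκvalq : κval > 1 / 4 := by rw [hκval]; nlinarith
  have hm : 0 < min κfcd 1 := lt_min hκfcd one_pos
  have hm1 : min κfcd 1 ≤ 1 := min_le_right _ _
  have hmf : min κfcd 1 ≤ κfcd := min_le_left _ _
  have hζpos : 0 < ζ := by
    have := le_max_left η₂ (4 * κval / ((1 - η₁ - η) * min κfcd 1))
    linarith [hζ]
  have hmax : ζ - κgrad ≥ 4 * κval / ((1 - η₁ - η) * min κfcd 1) := by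
    have := le_max_right η₂ (4 * κval / ((1 - η₁ - η) * min κfcd 1))
    linarith [hζ]
  have hdm : 0 < (1 - η₁ - η) * min κfcd 1 := mul_pos hd hm
  have h1 : (ζ - κgrad) * ((1 - η₁ - η) * min κfcd 1) ≥ 4 * κval :=
    (div_le_iff₀ hdm).mp hmax
  have hamgm : (η₁ - η) * (1 - η₁ - η) ≤ 1 / 4 := by nlinarith [sq_nonneg (η₁ - η - (1 - η₁ - η))]
  -- key: κfcd * ζ - (2*κval + κfcd*κgrad) ≥ 2*κfcd*(η₁-η)
  have hkey : κfcd * ζ - (2 * κval + κfcd * κgrad) ≥ 2 * κfcd * (η₁ - η) := by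
    rcases le_total κfcd 1 with hc | hc
    · have hmeq : min κfcd 1 = κfcd := min_eq_left hc
      rw [hmeq] at h1
      nlinarith [mul_pos hd hκfcd, hamgm]
    · have hmeq : min κfcd 1 = 1 := min_eq_right hc
      rw [hmeq] at h1
      nlinarith [hamgm, mul_pos hd hκfcd]
  have hS : (1 / 2) * (κfcd - (2 * κval + κfcd * κgrad) / ζ) * ζ =
      (κfcd * ζ - (2 * κval + κfcd * κgrad)) / 2 := by
    field_simp
  have hfirst : (1 / 2) * (κfcd - (2 * κval + κfcd * κgrad) / ζ) * ζ ≥ κfcd * (η₁ - η) := by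
    rw [hS]; linarith
  refine ⟨hfirst, ?_⟩
  intro γ ν hγ ⟨hν0, hν1⟩ hratio
  have hM : 0 < min (η₂ / κbmh) 1 := lt_min (div_pos hη₂ (by linarith)) one_pos
  have hM1 : min (η₂ / κbmh) 1 ≤ 1 := min_le_right _ _
  have hden : 0 < (η₁ - η) * κfcd * min (η₂ / κbmh) 1 := by
    apply mul_pos (mul_pos (by linarith) hκfcd) hM
  have h1ν : 0 < 1 - ν := by linarith
  have hγ0 : 0 < γ := by linarith
  have hγ1 : 1 ≤ γ ^ 2 := one_le_pow₀ hγ.le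
  have hγinv : γ⁻¹ ^ 2 ≤ 1 := by
    rw [inv_pow]
    exact inv_le_one_of_one_le₀ hγ1
  have hγinvpos : 0 < γ⁻¹ ^ 2 := by positivity
  have hr : ν * ((η₁ - η) * κfcd * min (η₂ / κbmh) 1) > (1 - ν) * (γ ^ 2 - γ⁻¹ ^ 2) := by
    have := (div_lt_div_iff₀ hden h1ν).mp hratio
    nlinarith [this]
  have hsec : ν * ((1 / 2) * (κfcd - (2 * κval + κfcd * κgrad) / ζ) * ζ) >
      (1 - ν) * (γ ^ 2 - 1) := by
    have h2 : ν * ((η₁ - η) * κfcd * min (η₂ / κbmh) 1) ≤ ν * (κfcd * (η₁ - η)) := by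
      have : (η₁ - η) * κfcd * min (η₂ / κbmh) 1 ≤ κfcd * (η₁ - η) := by
        nlinarith [mul_pos (show (0:ℝ) < η₁ - η by linarith) hκfcd]
      nlinarith
    have h3 : ν * (κfcd * (η₁ - η)) ≤
        ν * ((1 / 2) * (κfcd - (2 * κval + κfcd * κgrad) / ζ) * ζ) := by
      nlinarith [hfirst]
    have h4 : (1 - ν) * (γ ^ 2 - 1) ≤ (1 - ν) * (γ ^ 2 - γ⁻¹ ^ 2) := by nlinarith
    linarith
  exact ⟨hsec, by nlinarith [hsec]⟩
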